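/- For every integer λ ≥ 1 and every integer n ≥ 1, the n×n matrix T defined by T_{i,j} = (λ + i − 1)/λ for all 1 ≤ i ≤ j ≤ n with j − i even, and T_{i,j} = 0 otherwise, satisfies S_λ T = T S_λ = I; that is, T = S_λ⁻¹. -/

import Mathlib

open Matrix

/-- Truncated conversion operator from ultraspherical `C^(λ)` coefficients to `C^(λ+1)`
coefficients (1-based indexing): `(S_λ)_{j,j} = λ/(λ+j-1)`, `(S_λ)_{j,j+2} = -λ/(λ+j+1)`. -/
noncomputable def Sl (lam n : ℕ) : Matrix (Fin n) (Fin n) ℝ :=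
  Matrix.of fun i j =>
    if (j : ℕ) = (i : ℕ) then (lam : ℝ) / ((lam : ℝ) + (i : ℕ))
    else if (j : ℕ) = (i : ℕ) + 2 then -((lam : ℝ) / ((lam : ℝ) + (i : ℕ) + 2)) else 0

/-- The claimed inverse of `S_λ` (1-based indexing): `T_{i,j} = (λ+i-1)/λ` for
`1 ≤ i ≤ j` with `j - i` even, all other entries zero. -/
noncomputable def SlInv (lam n : ℕ) : Matrix (Fin n) (Fin n) ℝ :=
  Matrix.of fun i j =>
    if (i : ℕ) ≤ (j : ℕ) ∧ ((j : ℕ) - (i : ℕ)) % 2 = 0 then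
      ((lam : ℝ) + (i : ℕ)) / (lam : ℝ) else 0

lemma sum_ite_val {n : ℕ} (f : Fin n → ℝ) (m : ℕ) :
    (∑ j : Fin n, if (j : ℕ) = m then f j else 0) =
      if h : m < n then f ⟨m, h⟩ else 0 := by
  split_ifs with h
  · rw [Finset.sum_eq_single (⟨m, h⟩ : Fin n)]
    · simp
    · intro j _ hj
      rw [if_neg]
      intro he
      exact hj (Fin.ext he)
    · intro h'
      exact absurd (Finset.mem_univ _) h'
  · apply Finset.sum_eq_zero
    intro j _
    rw [if_neg]
    intro he
    exact h (he ▸ j.isLt)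

lemma ite_split_mul (p q : Prop) [Decidable p] [Decidable q] (h : ¬(p ∧ q)) (a b t : ℝ) :
    (if p then a else if q then b else 0) * t =
      (if p then a * t else 0) + (if q then b * t else 0) := by
  by_cases hp : p <;> by_cases hq : q <;> simp [hp, hq] <;> exact absurd ⟨hp, hq⟩ h

lemma mul_ite_split (p q : Prop) [Decidable p] [Decidable q] (h : ¬(p ∧ q)) (a b t : ℝ) :
    t * (if p then a else if q then b else 0) =
      (if p then t * a else 0) + (if q then t * b else 0) := by
  by_cases hp : p <;> by_cases hq : q <;> simp [hp, hq] <;> exact absurd ⟨hp, hq⟩ h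

/-- For every `λ ≥ 1` and `n ≥ 1`, the matrix `T = SlInv λ n` satisfies
`S_λ T = T S_λ = I`, i.e. `T = S_λ⁻¹`. -/
theorem stmt6 (lam n : ℕ) (hlam : 1 ≤ lam) (hn : 1 ≤ n) :
    Sl lam n * SlInv lam n = 1 ∧ SlInv lam n * Sl lam n = 1 := by
  have hL : (0:ℝ) < (lam : ℝ) := by exact_mod_cast hlam
  have hL0 : (lam : ℝ) ≠ 0 := ne_of_gt hL
  constructor
  · ext i k
    have hi := i.isLt
    have hk := k.isLt
    have h1 : (lam : ℝ) + (i : ℕ) ≠ 0 := by positivity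
    have h2 : (lam : ℝ) + (i : ℕ) + 2 ≠ 0 := by positivity
    rw [Matrix.mul_apply, Matrix.one_apply]
    simp only [Sl, SlInv, Matrix.of_apply]
    rw [Finset.sum_congr rfl (fun j _ => ite_split_mul _ _ (by omega) _ _ _)]
    rw [Finset.sum_add_distrib, sum_ite_val, sum_ite_val]
    simp only [Fin.ext_iff]
    split_ifs <;> first | rfl | assumption | omega | (field_simp; first | ring1 | (push_cast; ring1) | ((rename_i h; rw [h]) <;> ring1) | skip; try ring; try exact_mod_cast ‹(i:ℕ) = (k:ℕ)›; try exact_mod_cast (‹(i:ℕ) = (k:ℕ)›).symm)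
  · ext i k
    have hi := i.isLt
    have hk := k.isLt
    have h1 : (lam : ℝ) + (i : ℕ) ≠ 0 := by positivity
    have h2 : (lam : ℝ) + (k : ℕ) ≠ 0 := by positivity
    rw [Matrix.mul_apply, Matrix.one_apply]
    simp only [Sl, SlInv, Matrix.of_apply]
    rw [Finset.sum_congr rfl (fun j _ => mul_ite_split _ _ (by omega) _ _ _)]
    rw [Finset.sum_add_distrib]
    by_cases h2k : 2 ≤ (k : ℕ)
    · have hrw : ∀ j : Fin n, ((k:ℕ) = (j:ℕ)) = ((j:ℕ) = (k:ℕ)) := fun j => by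
        rw [eq_iff_iff]; omega
      have hrw2 : ∀ j : Fin n, ((k:ℕ) = (j:ℕ) + 2) = ((j:ℕ) = (k:ℕ) - 2) := fun j => by
        rw [eq_iff_iff]; omega
      simp only [hrw, hrw2]
      rw [sum_ite_val, sum_ite_val]
      have hcast : (((k:ℕ) - 2 : ℕ) : ℝ) = ((k:ℕ) : ℝ) - 2 := by
        push_cast [h2k]; ring
      simp only [Fin.ext_iff, hcast]
      rw [show (lam:ℝ) + (((k:ℕ):ℝ) - 2) + 2 = (lam:ℝ) + ((k:ℕ):ℝ) from by ring]
      split_ifs <;> first | rfl | assumption | omega | (field_simp; first | ring1 | (push_cast; ring1) | ((rename_i h; rw [h]) <;> ring1) | skip; try ring; try exact_mod_cast ‹(i:ℕ) = (k:ℕ)›; try exact_mod_cast (‹(i:ℕ) = (k:ℕ)›).symm)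
    · have hrw : ∀ j : Fin n, ((k:ℕ) = (j:ℕ)) = ((j:ℕ) = (k:ℕ)) := fun j => by
        rw [eq_iff_iff]; omega
      have hrw2 : ∀ j : Fin n, ¬ ((k:ℕ) = (j:ℕ) + 2) := fun j => by omega
      simp only [hrw, hrw2, if_false, Finset.sum_const_zero, add_zero]
      rw [sum_ite_val]
      simp only [Fin.ext_iff]
      split_ifs <;> first | rfl | assumption | omega | (field_simp; first | ring1 | (push_cast; ring1) | ((rename_i h; rw [h]) <;> ring1) | skip; try ring; try exact_mod_cast ‹(i:ℕ) = (k:ℕ)›; try exact_mod_cast (‹(i:ℕ) = (k:ℕ)›).symm)
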